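/- Let H be a group and C a subgroup of the center of H such that A := H/C is abelian, with quotient map π : H → A. Let H×_A H := {(h₁,h₂) ∈ H × H : π(h₁) = π(h₂)}, let K := {(c,c⁻¹) : c ∈ C} (a central subgroup of H×_A H), and let H⁽²⁾ := (H×_A H)/K be the Baer square of H, with projection p : H⁽²⁾ → A, (h₁,h₂)K ↦ π(h₁), and with C embedded in H⁽²⁾ via ι(c) := (c,1)K. Let {·,·} : A × A → C be the commutator pairing: {π(h₁),π(h₂)} := ⁅h₁,h₂⁆ = h₁h₂h₁⁻¹h₂⁻¹ ∈ C, which is independent of the choice of lifts h₁,h₂. Then the map σ ↦ s_σ, where s_σ(π(h)) := ((h·σ(h))⁻¹·h, h)·K ∈ H⁽²⁾ (well defined, using h·σ(h) ∈ C), is a bijection from the set of symmetric structures on H onto the set of set-theoretic sections s : A → H⁽²⁾ of p satisfying s(a)·s(b) = s(a·b)·ι({a,b}) for all a,b ∈ A. -/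

import Mathlib

section BaerSquare

open scoped commutatorElement

variable {H : Type*} [Group H] (C : Subgroup H) [C.Normal]

/-- A symmetric structure on the central extension `H` of `A = H/C` by `C`. -/
def IsSymmStruct (σ : H ≃* H) : Prop :=
  (∀ h : H, σ (σ h) = h) ∧ (∀ c ∈ C, σ c = c) ∧
    ∀ h : H, (QuotientGroup.mk (σ h) : H ⧸ C) = (QuotientGroup.mk h)⁻¹

/-- The fiber product `H ×_A H = {(h₁,h₂) : π h₁ = π h₂}`, as a subgroup of `H × H`:
the preimage of the diagonal under `π × π`. -/
def fiberProd : Subgroup (H × H) :=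
  Subgroup.comap ((QuotientGroup.mk' C).prodMap (QuotientGroup.mk' C))
    ((MonoidHom.id (H ⧸ C)).prod (MonoidHom.id (H ⧸ C))).range

variable (hC : C ≤ Subgroup.center H)

/-- The central subgroup `K = {(c,c⁻¹) : c ∈ C}` of the fiber product `H ×_A H`. -/
def antiDiag : Subgroup (fiberProd C) where
  carrier := {x | (x : H × H).1 ∈ C ∧ (x : H × H).2 = (x : H × H).1⁻¹}
  one_mem' := ⟨C.one_mem, by simp⟩
  mul_mem' := by
    rintro a b ⟨ha1, ha2⟩ ⟨hb1, hb2⟩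
    refine ⟨C.mul_mem ha1 hb1, ?_⟩
    have hcomm := Subgroup.mem_center_iff.mp (hC (C.inv_mem ha1))
    show ((a : H × H) * (b : H × H)).2 = ((a : H × H) * (b : H × H)).1⁻¹
    rw [Prod.snd_mul, Prod.fst_mul, ha2, hb2, mul_inv_rev, hcomm]
  inv_mem' := by
    rintro a ⟨ha1, ha2⟩
    refine ⟨C.inv_mem ha1, ?_⟩
    show ((a : H × H)⁻¹).2 = ((a : H × H)⁻¹).1⁻¹
    rw [Prod.snd_inv, Prod.fst_inv, ha2]

instance antiDiag_normal : (antiDiag C hC).Normal := by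
  constructor
  rintro n ⟨hn1, hn2⟩ g
  have hc1 := Subgroup.mem_center_iff.mp (hC hn1)
  have hc2 := Subgroup.mem_center_iff.mp (hC (C.inv_mem hn1))
  have e1 : ((g * n * g⁻¹ : fiberProd C) : H × H).1 = (n : H × H).1 := by
    show (g : H × H).1 * (n : H × H).1 * ((g : H × H).1)⁻¹ = (n : H × H).1
    rw [hc1, mul_assoc, mul_inv_cancel, mul_one]
  have e2 : ((g * n * g⁻¹ : fiberProd C) : H × H).2 = (n : H × H).2 := by
    show (g : H × H).2 * (n : H × H).2 * ((g : H × H).2)⁻¹ = (n : H × H).2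
    rw [hn2, hc2, mul_assoc, mul_inv_cancel, mul_one]
  exact ⟨e1 ▸ hn1, by rw [e1, e2, hn2]⟩

/-- The embedding `ι : C → H⁽²⁾`, `c ↦ (c,1)·K`, of `C` into the Baer square
`H⁽²⁾ = (H ×_A H)/K`. -/
def baerIota (c : C) : fiberProd C ⧸ antiDiag C hC :=
  QuotientGroup.mk
    ⟨((c : H), (1 : H)), by
      refine Subgroup.mem_comap.mpr (MonoidHom.mem_range.mpr ⟨1, Prod.ext ?_ ?_⟩)
      · simpa using ((QuotientGroup.eq_one_iff (c : H)).mpr c.2).symm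
      · simp⟩

/-- The projection `p : H⁽²⁾ → A`, `(h₁,h₂)·K ↦ π h₁`. -/
def baerProj : (fiberProd C ⧸ antiDiag C hC) →* H ⧸ C :=
  QuotientGroup.lift (antiDiag C hC)
    ((QuotientGroup.mk' C).comp ((MonoidHom.fst H H).comp (fiberProd C).subtype))
    (by
      rintro x ⟨hx1, _⟩
      simpa using (QuotientGroup.eq_one_iff ((x : H × H).1)).mpr hx1)

/-- A set-theoretic section `s : A → H⁽²⁾` of `p` satisfying the cocycle condition
`s(a)·s(b) = s(a·b)·ι({a,b})`, where `{·,·}` is the commutator pairing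
`{π h₁, π h₂} = ⁅h₁,h₂⁆ ∈ C`. -/
def IsBaerSection (hcomm : ∀ h₁ h₂ : H, ⁅h₁, h₂⁆ ∈ C)
    (s : H ⧸ C → fiberProd C ⧸ antiDiag C hC) : Prop :=
  (∀ a : H ⧸ C, baerProj C hC (s a) = a) ∧
    ∀ h₁ h₂ : H,
      s (QuotientGroup.mk h₁) * s (QuotientGroup.mk h₂) =
        s (QuotientGroup.mk (h₁ * h₂)) * baerIota C hC ⟨⁅h₁, h₂⁆, hcomm h₁ h₂⟩

/-!
An element of the Baer square over `π h` has a unique representative of the form `(g, h)`.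
Hence sections of the projection correspond to the `C`-equivariant maps `τ : H → H` lifting
inversion on `A`, via `π h ↦ ((τ h)⁻¹, h)·K`. Since `⁅τ h₁, τ h₂⁆ = ⁅h₁⁻¹, h₂⁻¹⁆ = ⁅h₁, h₂⁆`,
the cocycle condition for this section says exactly that `τ` is multiplicative. Such a
multiplicative `τ` fixes `C` and is an involution: writing `τ h = h⁻¹ k` with `k ∈ C` central,
`τ (τ h) = (τ h)⁻¹ k = h`. So these maps are exactly the symmetric structures, and for `τ = σ`
the section is `s_σ`, because `(h σ h)⁻¹ h = (σ h)⁻¹`.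
-/

theorem commutatorElement_mul_left_of_mem_center {G : Type*} [Group G] {c : G}
    (hc : c ∈ Subgroup.center G) (a b : G) : ⁅a * c, b⁆ = ⁅a, b⁆ := by
  rw [commutatorElement_def, commutatorElement_def, mul_inv_rev, mul_assoc a c b,
    ← Subgroup.mem_center_iff.mp hc b]
  group

theorem commutatorElement_mul_right_of_mem_center {G : Type*} [Group G] {c : G}
    (hc : c ∈ Subgroup.center G) (a b : G) : ⁅a, b * c⁆ = ⁅a, b⁆ := by
  rw [← commutatorElement_inv, commutatorElement_mul_left_of_mem_center hc,
    commutatorElement_inv]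

theorem commutatorElement_inv_inv_of_mem_center {G : Type*} [Group G] {a b : G}
    (h : ⁅a, b⁆ ∈ Subgroup.center G) : ⁅a⁻¹, b⁻¹⁆ = ⁅a, b⁆ := by
  have h' : ⁅b⁻¹, a⁆ = ⁅a, b⁆ := by
    rw [commutatorElement_inv_left, Subgroup.mem_center_iff.mp h, inv_mul_cancel_right]
  rw [commutatorElement_inv_left, h', Subgroup.mem_center_iff.mp h, inv_mul_cancel_right]

theorem commutatorElement_eq_of_mk_eq {G : Type*} [Group G] {N : Subgroup G}
    (hN : N ≤ Subgroup.center G) {a a' b b' : G} (ha : (a : G ⧸ N) = a')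
    (hb : (b : G ⧸ N) = b') : ⁅a, b⁆ = ⁅a', b'⁆ := by
  obtain ⟨c, hc, rfl⟩ : ∃ c ∈ N, a' = a * c := ⟨a⁻¹ * a', QuotientGroup.eq.mp ha, by group⟩
  obtain ⟨d, hd, rfl⟩ : ∃ d ∈ N, b' = b * d := ⟨b⁻¹ * b', QuotientGroup.eq.mp hb, by group⟩
  rw [commutatorElement_mul_left_of_mem_center (hN hc),
    commutatorElement_mul_right_of_mem_center (hN hd)]

theorem mem_fiberProd {x : H × H} : x ∈ fiberProd C ↔ (x.1 : H ⧸ C) = x.2 := by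
  simp [fiberProd, Prod.ext_iff]

def baerMk (g h : H) (hgh : (g : H ⧸ C) = h) : fiberProd C ⧸ antiDiag C hC :=
  QuotientGroup.mk ⟨(g, h), (mem_fiberProd C).mpr hgh⟩

theorem baerMk_eq_baerMk_iff {g g' h : H} (hg : (g : H ⧸ C) = h) (hg' : (g' : H ⧸ C) = h) :
    baerMk C hC g h hg = baerMk C hC g' h hg' ↔ g = g' := by
  refine ⟨fun hK => ?_, fun hgg' => by subst hgg'; rfl⟩
  simpa [inv_mul_eq_one, eq_comm] using (QuotientGroup.eq.mp hK).2

theorem baerMk_mul_baerMk {g h g' h' : H} (hg : (g : H ⧸ C) = h) (hg' : (g' : H ⧸ C) = h') :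
    baerMk C hC g h hg * baerMk C hC g' h' hg' =
      baerMk C hC (g * g') (h * h') (by rw [QuotientGroup.mk_mul, QuotientGroup.mk_mul, hg, hg']) :=
  rfl

theorem baerIota_eq_baerMk (c : C) :
    baerIota C hC c = baerMk C hC c 1 ((QuotientGroup.eq_one_iff _).mpr c.2) :=
  rfl

theorem baerMk_eq_baerMk_of_mem {g h g' h' c : H} (hg : (g : H ⧸ C) = h)
    (hg' : (g' : H ⧸ C) = h') (hc : c ∈ C) (hgc : g' = c⁻¹ * g) (hhc : h' = h * c) :
    baerMk C hC g' h' hg' = baerMk C hC g h hg := by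
  subst hgc hhc
  have hconj : g⁻¹ * c * g = c := by rw [mul_assoc, ← Subgroup.mem_center_iff.mp (hC hc)]; group
  refine QuotientGroup.eq.mpr ⟨?_, ?_⟩
  · show (c⁻¹ * g)⁻¹ * g ∈ C
    simpa [mul_assoc, hconj] using hc
  · show (h * c)⁻¹ * h = ((c⁻¹ * g)⁻¹ * g)⁻¹
    simp [mul_assoc, hconj]

def baerMul : fiberProd C ⧸ antiDiag C hC → H :=
  Quotient.lift (fun x : fiberProd C => (x : H × H).1 * (x : H × H).2) <| by
    intro x y hxy
    obtain ⟨hk, hk'⟩ := QuotientGroup.leftRel_apply.mp hxy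
    have hy : y = x * (x⁻¹ * y) := (mul_inv_cancel_left x y).symm
    generalize x⁻¹ * y = k at hk hk' hy
    subst hy
    simp only [Subgroup.coe_mul, Prod.fst_mul, Prod.snd_mul, hk']
    rw [mul_assoc, ← mul_assoc _ (x : H × H).2, ← Subgroup.mem_center_iff.mp (hC hk)]
    group

theorem baerMul_baerMk {g h : H} (hg : (g : H ⧸ C) = h) :
    baerMul C hC (baerMk C hC g h hg) = g * h :=
  rfl

theorem exists_eq_baerMk_of_baerProj_eq {b : fiberProd C ⧸ antiDiag C hC} {h : H}
    (hb : baerProj C hC b = h) : ∃ g hg, b = baerMk C hC g h hg := by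
  obtain ⟨⟨⟨x₁, x₂⟩, hx⟩, rfl⟩ := QuotientGroup.mk_surjective b
  have hx₁ : (x₁ : H ⧸ C) = h := hb
  have hx₂ : (x₂ : H ⧸ C) = h := ((mem_fiberProd C).mp hx).symm.trans hx₁
  obtain ⟨c, hc, rfl⟩ : ∃ c ∈ C, h = x₂ * c := ⟨x₂⁻¹ * h, QuotientGroup.eq.mp hx₂, by group⟩
  have hcx₁ : ((c⁻¹ * x₁ : H) : H ⧸ C) = (x₂ * c : H) := by
    rw [QuotientGroup.mk_mul, (QuotientGroup.eq_one_iff _).mpr (C.inv_mem hc), one_mul, hx₁]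
  exact ⟨c⁻¹ * x₁, hcx₁,
    (baerMk_eq_baerMk_of_mem C hC ((mem_fiberProd C).mp hx) hcx₁ hc rfl rfl).symm⟩

def IsInvLift (τ : H → H) : Prop :=
  (∀ h, ∀ c ∈ C, τ (h * c) = τ h * c) ∧ ∀ h, (τ h : H ⧸ C) = (h : H ⧸ C)⁻¹

variable {C} in
theorem IsInvLift.mk_inv_apply {τ : H → H} (hτ : IsInvLift C τ) (h : H) :
    (((τ h)⁻¹ : H) : H ⧸ C) = h := by
  rw [QuotientGroup.mk_inv, hτ.2, inv_inv]

def baerSectionOf {τ : H → H} (hτ : IsInvLift C τ) : H ⧸ C → fiberProd C ⧸ antiDiag C hC :=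
  Quotient.lift (fun h => baerMk C hC (τ h)⁻¹ h (hτ.mk_inv_apply h)) <| by
    intro h h' hhh'
    obtain ⟨c, hc, rfl⟩ : ∃ c ∈ C, h' = h * c :=
      ⟨h⁻¹ * h', QuotientGroup.leftRel_apply.mp hhh', by group⟩
    exact (baerMk_eq_baerMk_of_mem C hC _ _ hc (by rw [hτ.1 h c hc, mul_inv_rev]) rfl).symm

theorem baerSectionOf_mk {τ : H → H} (hτ : IsInvLift C τ) (h : H) :
    baerSectionOf C hC hτ h = baerMk C hC (τ h)⁻¹ h (hτ.mk_inv_apply h) :=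
  rfl

theorem baerProj_baerSectionOf {τ : H → H} (hτ : IsInvLift C τ) (a : H ⧸ C) :
    baerProj C hC (baerSectionOf C hC hτ a) = a := by
  induction a using QuotientGroup.induction_on with
  | H h => exact hτ.mk_inv_apply h

include hC in
theorem commutatorElement_apply_eq_of_isInvLift (hcomm : ∀ h₁ h₂ : H, ⁅h₁, h₂⁆ ∈ C)
    {τ : H → H} (hτ : IsInvLift C τ) (h₁ h₂ : H) : ⁅τ h₁, τ h₂⁆ = ⁅h₁, h₂⁆ := by
  calc ⁅τ h₁, τ h₂⁆ = ⁅h₁⁻¹, h₂⁻¹⁆ :=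
        commutatorElement_eq_of_mk_eq hC (by rw [hτ.2, QuotientGroup.mk_inv])
          (by rw [hτ.2, QuotientGroup.mk_inv])
    _ = ⁅h₁, h₂⁆ := commutatorElement_inv_inv_of_mem_center (hC (hcomm h₁ h₂))

theorem baerSectionOf_mul_eq_iff (hcomm : ∀ h₁ h₂ : H, ⁅h₁, h₂⁆ ∈ C) {τ : H → H}
    (hτ : IsInvLift C τ) (h₁ h₂ : H) :
    baerSectionOf C hC hτ h₁ * baerSectionOf C hC hτ h₂ =
        baerSectionOf C hC hτ (h₁ * h₂ : H) * baerIota C hC ⟨⁅h₁, h₂⁆, hcomm h₁ h₂⟩ ↔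
      τ (h₁ * h₂) = τ h₁ * τ h₂ := by
  have hswap : τ h₁ * τ h₂ = ⁅h₁, h₂⁆ * (τ h₂ * τ h₁) := by
    rw [← commutatorElement_apply_eq_of_isInvLift C hC hcomm hτ, commutatorElement_def]
    group
  simp only [baerSectionOf_mk, baerIota_eq_baerMk, baerMk_mul_baerMk, mul_one]
  rw [baerMk_eq_baerMk_iff, hswap, ← mul_inv_rev, inv_eq_iff_eq_inv, mul_inv_rev, inv_inv,
    eq_inv_mul_iff_mul_eq, eq_comm]

theorem isBaerSection_baerSectionOf_iff (hcomm : ∀ h₁ h₂ : H, ⁅h₁, h₂⁆ ∈ C) {τ : H → H}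
    (hτ : IsInvLift C τ) :
    IsBaerSection C hC hcomm (baerSectionOf C hC hτ) ↔ ∀ h₁ h₂, τ (h₁ * h₂) = τ h₁ * τ h₂ :=
  (and_iff_right (baerProj_baerSectionOf C hC hτ)).trans
    (forall₂_congr (baerSectionOf_mul_eq_iff C hC hcomm hτ))

def invLiftOf (s : H ⧸ C → fiberProd C ⧸ antiDiag C hC) (h : H) : H :=
  h * (baerMul C hC (s h))⁻¹

theorem invLiftOf_eq_inv {s : H ⧸ C → fiberProd C ⧸ antiDiag C hC} {g h : H}
    (hg : (g : H ⧸ C) = h) (hs : s h = baerMk C hC g h hg) : invLiftOf C hC s h = g⁻¹ := by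
  rw [invLiftOf, hs, baerMul_baerMk]
  group

theorem isInvLift_invLiftOf {s : H ⧸ C → fiberProd C ⧸ antiDiag C hC}
    (hs : ∀ a, baerProj C hC (s a) = a) : IsInvLift C (invLiftOf C hC s) := by
  refine ⟨fun h c hc => ?_, fun h => ?_⟩
  · rw [invLiftOf, invLiftOf, QuotientGroup.mk_mul_of_mem h hc, mul_assoc, mul_assoc,
      Subgroup.mem_center_iff.mp (hC hc)]
  · obtain ⟨g, hg, hsg⟩ := exists_eq_baerMk_of_baerProj_eq C hC (hs h)
    rw [invLiftOf_eq_inv C hC hg hsg, QuotientGroup.mk_inv, hg]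

theorem invLiftOf_baerSectionOf {τ : H → H} (hτ : IsInvLift C τ) :
    invLiftOf C hC (baerSectionOf C hC hτ) = τ :=
  funext fun h => (invLiftOf_eq_inv C hC _ (baerSectionOf_mk C hC hτ h)).trans (inv_inv _)

theorem baerSectionOf_invLiftOf {s : H ⧸ C → fiberProd C ⧸ antiDiag C hC}
    (hs : ∀ a, baerProj C hC (s a) = a) :
    baerSectionOf C hC (isInvLift_invLiftOf C hC hs) = s := by
  funext a
  induction a using QuotientGroup.induction_on with | H h => ?_
  obtain ⟨g, hg, hsg⟩ := exists_eq_baerMk_of_baerProj_eq C hC (hs h)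
  rw [baerSectionOf_mk, hsg, baerMk_eq_baerMk_iff, invLiftOf_eq_inv C hC hg hsg, inv_inv]

def mulInvLiftEquivBaerSection (hcomm : ∀ h₁ h₂ : H, ⁅h₁, h₂⁆ ∈ C) :
    {τ : H → H // IsInvLift C τ ∧ ∀ h₁ h₂, τ (h₁ * h₂) = τ h₁ * τ h₂} ≃
      {s : H ⧸ C → fiberProd C ⧸ antiDiag C hC // IsBaerSection C hC hcomm s} where
  toFun τ := ⟨baerSectionOf C hC τ.2.1, (isBaerSection_baerSectionOf_iff C hC hcomm τ.2.1).2 τ.2.2⟩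
  invFun s := ⟨invLiftOf C hC s, isInvLift_invLiftOf C hC s.2.1,
    (isBaerSection_baerSectionOf_iff C hC hcomm _).1
      ((baerSectionOf_invLiftOf C hC s.2.1).symm ▸ s.2)⟩
  left_inv τ := Subtype.ext (invLiftOf_baerSectionOf C hC τ.2.1)
  right_inv s := Subtype.ext (baerSectionOf_invLiftOf C hC s.2.1)

theorem isInvLift_of_isSymmStruct {σ : H ≃* H} (hσ : IsSymmStruct C σ) : IsInvLift C σ :=
  ⟨fun h c hc => by rw [map_mul, hσ.2.1 c hc], hσ.2.2⟩

variable {C} in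
include hC in
theorem IsInvLift.involutive_of_map_mul {τ : H → H} (hτ : IsInvLift C τ)
    (hmul : ∀ h₁ h₂, τ (h₁ * h₂) = τ h₁ * τ h₂) : Function.Involutive τ := by
  intro h
  obtain ⟨k, hk, hτh⟩ : ∃ k ∈ C, τ h = h⁻¹ * k :=
    ⟨h * τ h, (QuotientGroup.eq_one_iff _).mp (by rw [QuotientGroup.mk_mul, hτ.2, mul_inv_cancel]),
      by group⟩
  have hτinv : τ h⁻¹ = (τ h)⁻¹ := map_inv (MonoidHom.mk' τ hmul) h
  rw [hτh, hτ.1 _ k hk, hτinv, hτh, mul_inv_rev, inv_inv, mul_assoc,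
    Subgroup.mem_center_iff.mp (hC hk), inv_mul_cancel_left]

def symmStructOfMulInvLift {τ : H → H} (hτ : IsInvLift C τ)
    (hmul : ∀ h₁ h₂, τ (h₁ * h₂) = τ h₁ * τ h₂) : H ≃* H :=
  { (hτ.involutive_of_map_mul hC hmul).toPerm τ with map_mul' := hmul }

theorem isSymmStruct_symmStructOfMulInvLift {τ : H → H} (hτ : IsInvLift C τ)
    (hmul : ∀ h₁ h₂, τ (h₁ * h₂) = τ h₁ * τ h₂) :
    IsSymmStruct C (symmStructOfMulInvLift C hC hτ hmul) := by
  refine ⟨hτ.involutive_of_map_mul hC hmul, fun c hc => ?_, hτ.2⟩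
  have hτ1 : τ 1 = 1 := map_one (MonoidHom.mk' τ hmul)
  have hτc := hτ.1 1 c hc
  rwa [one_mul, hτ1, one_mul] at hτc

def symmStructEquivMulInvLift :
    {σ : H ≃* H // IsSymmStruct C σ} ≃
      {τ : H → H // IsInvLift C τ ∧ ∀ h₁ h₂, τ (h₁ * h₂) = τ h₁ * τ h₂} where
  toFun σ := ⟨σ.1, isInvLift_of_isSymmStruct C σ.2, map_mul σ.1⟩
  invFun τ := ⟨symmStructOfMulInvLift C hC τ.2.1 τ.2.2,
    isSymmStruct_symmStructOfMulInvLift C hC τ.2.1 τ.2.2⟩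
  left_inv _ := Subtype.ext (MulEquiv.ext fun _ => rfl)
  right_inv _ := rfl

theorem symmetric_structures_biject_with_baer_sections
    (hcomm : ∀ h₁ h₂ : H, ⁅h₁, h₂⁆ ∈ C) :
    ∃ e : {σ : H ≃* H // IsSymmStruct C σ} ≃
        {s : H ⧸ C → fiberProd C ⧸ antiDiag C hC // IsBaerSection C hC hcomm s},
      ∀ (σ : {σ : H ≃* H // IsSymmStruct C σ}) (h : H) (x : fiberProd C),
        (x : H × H).1 = (h * σ.1 h)⁻¹ * h → (x : H × H).2 = h →
          (e σ).1 (QuotientGroup.mk h) = QuotientGroup.mk x := by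
  refine ⟨(symmStructEquivMulInvLift C hC).trans (mulInvLiftEquivBaerSection C hC hcomm), ?_⟩
  rintro ⟨σ, hσ⟩ h ⟨⟨x₁, x₂⟩, hx⟩ hx₁ hx₂
  dsimp only at hx₁ hx₂
  subst x₁ x₂
  have hσ' := isInvLift_of_isSymmStruct C hσ
  show baerSectionOf C hC hσ' h = _
  exact (baerMk_eq_baerMk_iff C hC (hσ'.mk_inv_apply h) ((mem_fiberProd C).mp hx)).mpr (by group)

end BaerSquare
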